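/- In ℝⁿ with n ≥ 1, let f : ℝⁿ → ℝ be f(0) = −1 and f(x) = 0 for x ≠ 0, and define u : ℝⁿ → ℝ by u(0) = 1 and u(x) = 0 for x ≠ 0. Then u is upper semicontinuous and is a viscosity subsolution of the equation −Δw/(1+|Δw|) + f(x) = 0 on ℝⁿ: for every C² function φ and every local maximum point x₀ of u − φ, one has −Tr(D²φ(x₀))/(1 + |Tr(D²φ(x₀))|) + f(x₀) ≤ 0. Since u attains a positive maximum at 0 but is not constant, the strong maximum principle fails for this degenerate operator. -/

import Mathlib

open Classical

/-- The Laplacian of `φ` at `x`: the trace of the Hessian. -/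
noncomputable def lap (n : ℕ) (φ : EuclideanSpace ℝ (Fin n) → ℝ)
    (x : EuclideanSpace ℝ (Fin n)) : ℝ :=
  ∑ i : Fin n,
    fderiv ℝ (fun y => fderiv ℝ φ y (EuclideanSpace.single i 1)) x (EuclideanSpace.single i 1)

/-!
Off the origin `u` is locally constant, so a `C²` function touching `u` from above there has a
local minimum and hence a nonnegative Laplacian, making the operator term `≤ 0`. At the origin
`f = -1`, while `-t / (1 + |t|) ≤ 1` for every `t`.
-/

open Filter Topology

theorem IsLocalMin.deriv_deriv_nonneg {g : ℝ → ℝ} {t₀ : ℝ} (h : IsLocalMin g t₀)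
    (hc : ContinuousAt g t₀) : 0 ≤ deriv (deriv g) t₀ := by
  by_contra! hneg
  -- By the second-derivative test `t₀` would also be a local maximum, so `g` is locally constant.
  have hmax : IsLocalMax g t₀ := isLocalMax_of_deriv_deriv_neg hneg h.deriv_eq_zero hc
  have hconst : g =ᶠ[𝓝 t₀] fun _ => g t₀ := by
    filter_upwards [h, hmax] with t hmin hmax
    exact le_antisymm hmax hmin
  have hderiv : deriv g =ᶠ[𝓝 t₀] fun _ => 0 := by
    filter_upwards [hconst.eventuallyEq_nhds] with t ht
    rw [ht.deriv_eq, deriv_const]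
  rw [hderiv.deriv_eq, deriv_const] at hneg
  exact hneg.false

section SecondDirectionalDerivative

variable {E : Type*} [NormedAddCommGroup E] [NormedSpace ℝ E]

theorem IsLocalMin.fderiv_fderiv_apply_self_nonneg {φ : E → ℝ} (hφ : ContDiff ℝ 2 φ)
    {x₀ : E} (h : IsLocalMin φ x₀) (e : E) :
    0 ≤ fderiv ℝ (fun y => fderiv ℝ φ y e) x₀ e := by
  have hline : ∀ t : ℝ, HasDerivAt (fun s : ℝ => x₀ + s • e) e t := fun t => by
    simpa using ((hasDerivAt_id t).smul_const e).const_add x₀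
  have hderiv : deriv (fun t : ℝ => φ (x₀ + t • e)) = fun t => fderiv ℝ φ (x₀ + t • e) e :=
    funext fun t => ((hφ.differentiable two_ne_zero _).hasFDerivAt.comp_hasDerivAt t
      (hline t)).deriv
  have hφ' : Differentiable ℝ fun y => fderiv ℝ φ y e :=
    ((ContinuousLinearMap.apply ℝ ℝ e).contDiff.comp
      (hφ.fderiv_right (m := 1) le_rfl)).differentiable one_ne_zero
  have hderiv2 : HasDerivAt (fun t : ℝ => fderiv ℝ φ (x₀ + t • e) e)
      (fderiv ℝ (fun y => fderiv ℝ φ y e) x₀ e) 0 :=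
    (hφ' x₀).hasFDerivAt.comp_hasDerivAt_of_eq 0 (hline 0) (by simp)
  have hcont : Continuous fun t : ℝ => x₀ + t • e := by fun_prop
  have hmin : IsLocalMin (fun t : ℝ => φ (x₀ + t • e)) 0 :=
    IsLocalMin.comp_continuous (by simpa using h) hcont.continuousAt
  rw [← hderiv2.deriv, ← hderiv]
  exact hmin.deriv_deriv_nonneg (hφ.continuous.comp hcont).continuousAt

end SecondDirectionalDerivative

theorem lap_nonneg_of_isLocalMin {n : ℕ} {φ : EuclideanSpace ℝ (Fin n) → ℝ}
    (hφ : ContDiff ℝ 2 φ) {x₀ : EuclideanSpace ℝ (Fin n)} (h : IsLocalMin φ x₀) :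
    0 ≤ lap n φ x₀ :=
  Finset.sum_nonneg fun _ _ => h.fderiv_fderiv_apply_self_nonneg hφ _

theorem IsLocalMax.isLocalMin_of_sub_of_eventually_eq {X : Type*} [TopologicalSpace X]
    {u φ : X → ℝ} {x₀ : X} (h : IsLocalMax (fun x => u x - φ x) x₀)
    (hu : ∀ᶠ x in 𝓝 x₀, u x = u x₀) : IsLocalMin φ x₀ := by
  filter_upwards [h, hu] with x hx hux
  rw [hux] at hx
  linarith

theorem neg_div_one_add_abs_le_one (t : ℝ) : -t / (1 + |t|) ≤ 1 := by
  rw [div_le_one (by positivity)]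
  linarith [neg_le_abs t]

theorem neg_div_one_add_abs_nonpos {t : ℝ} (ht : 0 ≤ t) : -t / (1 + |t|) ≤ 0 :=
  div_nonpos_of_nonpos_of_nonneg (neg_nonpos.mpr ht) (by positivity)

theorem counterexample_SMP (n : ℕ) (hn : 0 < n)
    (f u : EuclideanSpace ℝ (Fin n) → ℝ)
    (hf : f = fun x => if x = 0 then (-1 : ℝ) else 0)
    (hu : u = fun x => if x = 0 then (1 : ℝ) else 0) :
    UpperSemicontinuous u ∧
    (∀ φ : EuclideanSpace ℝ (Fin n) → ℝ, ContDiff ℝ 2 φ →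
      ∀ x₀ : EuclideanSpace ℝ (Fin n), IsLocalMax (fun x => u x - φ x) x₀ →
        -(lap n φ x₀) / (1 + |lap n φ x₀|) + f x₀ ≤ 0) ∧
    (∀ x, u x ≤ u 0) ∧ 0 < u 0 ∧ ¬(∀ x, u x = u 0) := by
  subst hf hu
  have : Nontrivial (EuclideanSpace ℝ (Fin n)) :=
    Module.nontrivial_of_finrank_pos (R := ℝ) (by simpa using hn)
  refine ⟨?_, fun φ hφ x₀ hmax => ?_, fun x => by by_cases hx : x = 0 <;> simp [hx], by simp, ?_⟩
  · convert (isClosed_singleton (x := (0 : EuclideanSpace ℝ (Fin n)))).upperSemicontinuous_indicator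
      (zero_le_one (α := ℝ)) using 1
    ext x
    simp [Set.indicator_apply]
  · by_cases hx : x₀ = 0
    · simp only [hx, if_true]
      linarith [neg_div_one_add_abs_le_one (lap n φ 0)]
    · have hmin : IsLocalMin φ x₀ := hmax.isLocalMin_of_sub_of_eventually_eq <| by
        filter_upwards [eventually_ne_nhds hx] with x hx'
        simp [hx, hx']
      simpa [hx] using neg_div_one_add_abs_nonpos (lap_nonneg_of_isLocalMin hφ hmin)
  · obtain ⟨x, hx⟩ := exists_ne (0 : EuclideanSpace ℝ (Fin n))
    intro hconst
    simpa [hx] using hconst x
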